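/- arXiv:2009.11596 — 3 statements merged into one kernel-verified Lean document; each statement's English description precedes it below -/
import Mathlib

section
/- Let $\Phi:\{y\in\mathbb{C}: 1-\varepsilon<|y|<1+\varepsilon\}\to\mathbb{C}$ be analytic (given by an absolutely convergent Laurent series with non-negative coefficients $\Phi(y)=\sum_{\ell\in\mathbb{Z}} p_\ell y^\ell$, $\sum p_\ell = 1$), with $\Phi(1)=1$, $\Phi'(1)>0$, and $|\Phi(y)|<1$ for all $|y|=1$, $y\neq 1$ (aperiodicity). Then the function $y\mapsto 1/(1-\Phi(y))$ is meromorphic on a possibly smaller annulus $\{1-\varepsilon'<|y|<1+\varepsilon'\}$ with a unique pole there, which is simple, located at $y=1$, and has residue $-1/\Phi'(1)$. -/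
/-!
`Φ` is holomorphic on the annulus, being a locally uniformly convergent Laurent series, and
`Φ'(1) = ∑ ℓ p ℓ = d` by termwise differentiation. Hence `1 - Φ` has a simple zero at `1`, isolated
because `d ≠ 0`; by aperiodicity and compactness of the unit circle it has no other zero on a thin
annulus. There `1 / (1 - Φ)` minus its principal part `-(1/d)/(y - 1)` is the difference quotient at
`1` of the holomorphic function `(y - 1) / (1 - Φ y)`, hence holomorphic.
-/

open Filter Metric Set Topology

def annulus (r R : ℝ) : Set ℂ := {y : ℂ | r < ‖y‖ ∧ ‖y‖ < R}

lemma isOpen_annulus (r R : ℝ) : IsOpen (annulus r R) :=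
  (isOpen_lt continuous_const continuous_norm).inter (isOpen_lt continuous_norm continuous_const)

lemma annulus_subset_annulus {r R r' R' : ℝ} (hr : r ≤ r') (hR : R' ≤ R) :
    annulus r' R' ⊆ annulus r R :=
  fun _ hy => ⟨hr.trans_lt hy.1, hy.2.trans_le hR⟩

lemma ofReal_mem_annulus {r R t : ℝ} (ht : t ∈ Ioo r R) (hr : 0 ≤ r) : (t : ℂ) ∈ annulus r R := by
  have : ‖(t : ℂ)‖ = t := by
    rw [Complex.norm_real, Real.norm_of_nonneg (hr.trans ht.1.le)]
  show r < ‖(t : ℂ)‖ ∧ ‖(t : ℂ)‖ < R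
  rw [this]
  exact ht

lemma zpow_le_zpow_add_zpow {r R x : ℝ} (hr : 0 < r) (hrx : r ≤ x) (hxR : x ≤ R) (ℓ : ℤ) :
    x ^ ℓ ≤ r ^ ℓ + R ^ ℓ := by
  have hx : 0 < x := hr.trans_le hrx
  rcases le_total 0 ℓ with hℓ | hℓ
  · linarith [zpow_le_zpow_left₀ hℓ hx.le hxR, zpow_nonneg hr.le ℓ]
  · have key : x⁻¹ ^ (-ℓ) ≤ r⁻¹ ^ (-ℓ) :=
      zpow_le_zpow_left₀ (neg_nonneg.2 hℓ) (inv_nonneg.2 hx.le) (inv_anti₀ hr hrx)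
    rw [inv_zpow', neg_neg, inv_zpow', neg_neg] at key
    linarith [zpow_nonneg (hr.trans_le (hrx.trans hxR)).le ℓ]

section Laurent

variable {c : ℤ → ℂ} {f : ℂ → ℂ} {r R : ℝ}

lemma summable_norm_mul_zpow {t : ℝ} (ht : 0 < t) (hc : Summable fun ℓ => c ℓ * (t : ℂ) ^ ℓ) :
    Summable fun ℓ => ‖c ℓ‖ * t ^ ℓ := by
  refine (summable_norm_iff.2 hc).congr fun ℓ => ?_
  rw [norm_mul, norm_zpow, Complex.norm_real, Real.norm_of_nonneg ht.le]

lemma norm_mul_zpow_le {y : ℂ} (hr : 0 < r) (hy : y ∈ annulus r R) (ℓ : ℤ) :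
    ‖c ℓ * y ^ ℓ‖ ≤ ‖c ℓ‖ * (r ^ ℓ + R ^ ℓ) := by
  rw [norm_mul, norm_zpow]
  exact mul_le_mul_of_nonneg_left (zpow_le_zpow_add_zpow hr hy.1.le hy.2.le ℓ) (norm_nonneg _)

/-- On a smaller annulus `r' < ‖y‖ < R'` around `y` the series is dominated by the convergent
series `∑ ‖c ℓ‖ (r' ^ ℓ + R' ^ ℓ)`, so the Weierstrass M-test applies. -/
lemma differentiableAt_and_hasSum_deriv_of_hasSum_laurent (hr : 0 ≤ r)
    (hf : ∀ y ∈ annulus r R, HasSum (fun ℓ => c ℓ * y ^ ℓ) (f y)) {y : ℂ}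
    (hy : y ∈ annulus r R) :
    DifferentiableAt ℂ f y ∧ HasSum (fun ℓ => c ℓ * ℓ * y ^ (ℓ - 1)) (deriv f y) := by
  obtain ⟨r', hrr', hr'y⟩ := exists_between hy.1
  obtain ⟨R', hyR', hR'R⟩ := exists_between hy.2
  have hr' : 0 < r' := hr.trans_lt hrr'
  have hsub : annulus r' R' ⊆ annulus r R := annulus_subset_annulus hrr'.le hR'R.le
  have hyU : y ∈ annulus r' R' := ⟨hr'y, hyR'⟩
  have hsummable {t : ℝ} (ht : t ∈ Ioo r R) : Summable fun ℓ => ‖c ℓ‖ * t ^ ℓ :=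
    summable_norm_mul_zpow (hr.trans_lt ht.1) (hf _ (ofReal_mem_annulus ht hr)).summable
  have hu : Summable fun ℓ => ‖c ℓ‖ * (r' ^ ℓ + R' ^ ℓ) := by
    simpa only [mul_add] using (hsummable ⟨hrr', hr'y.trans hy.2⟩).add
      (hsummable ⟨hy.1.trans hyR', hR'R⟩)
  have hdiff (ℓ : ℤ) : DifferentiableOn ℂ (fun y => c ℓ * y ^ ℓ) (annulus r' R') :=
    fun z hz => ((differentiableAt_zpow.2 (Or.inl (norm_pos_iff.1 (hr'.trans hz.1)))).const_mul
      _).differentiableWithinAt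
  have hfeq : (fun y => ∑' ℓ, c ℓ * y ^ ℓ) =ᶠ[𝓝 y] f :=
    eventually_of_mem ((isOpen_annulus r' R').mem_nhds hyU) fun z hz => (hf z (hsub hz)).tsum_eq
  refine ⟨?_, ?_⟩
  · exact (((Complex.differentiableOn_tsum_of_summable_norm hu hdiff (isOpen_annulus r' R')
      fun ℓ z hz => norm_mul_zpow_le hr' hz ℓ).differentiableAt
      ((isOpen_annulus r' R').mem_nhds hyU))).congr_of_eventuallyEq hfeq.symm
  · rw [← hfeq.deriv_eq]
    simpa only [deriv_const_mul_field', deriv_zpow, mul_assoc] using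
      Complex.hasSum_deriv_of_summable_norm hu hdiff (isOpen_annulus r' R')
        (fun ℓ z hz => norm_mul_zpow_le hr' hz ℓ) hyU

end Laurent

lemma exists_thickening_ne_of_eventually_ne {X Y : Type*} [PseudoMetricSpace X]
    [TopologicalSpace Y] [T1Space Y] {f : X → Y} {U K : Set X} {x₀ : X} {w : Y}
    (hU : IsOpen U) (hf : ContinuousOn f U) (hK : IsCompact K) (hKU : K ⊆ U)
    (hKw : ∀ x ∈ K, x ≠ x₀ → f x ≠ w) (hx₀ : ∀ᶠ x in 𝓝[≠] x₀, f x ≠ w) :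
    ∃ δ > 0, ∀ x ∈ thickening δ K, x ≠ x₀ → f x ≠ w := by
  obtain ⟨V, hVw, hVopen, hx₀V⟩ := _root_.eventually_nhds_iff.1 (eventually_nhdsWithin_iff.1 hx₀)
  have hopen : IsOpen ((U ∩ f ⁻¹' {w}ᶜ) ∪ V) :=
    (hf.isOpen_inter_preimage hU isOpen_compl_singleton).union hVopen
  have hKsub : K ⊆ (U ∩ f ⁻¹' {w}ᶜ) ∪ V := by
    intro x hx
    by_cases hxx₀ : x = x₀
    · exact Or.inr (hxx₀ ▸ hx₀V)
    · exact Or.inl ⟨hKU hx, hKw x hx hxx₀⟩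
  obtain ⟨δ, hδ, hδsub⟩ := hK.exists_thickening_subset_open hopen hKsub
  refine ⟨δ, hδ, fun x hx hxx₀ => ?_⟩
  rcases hδsub hx with hxU | hxV
  · exact hxU.2
  · exact hVw x hxV hxx₀

lemma annulus_subset_thickening_sphere {δ : ℝ} (hδ : δ ≤ 1) :
    annulus (1 - δ) (1 + δ) ⊆ thickening δ (sphere 0 1) := by
  intro y ⟨hy1, hy2⟩
  have hy : ‖y‖ ≠ 0 := by linarith
  have hunit : ‖y / ‖y‖‖ = 1 := by
    rw [norm_div, Complex.norm_real, norm_norm, div_self hy]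
  refine mem_thickening_iff.2 ⟨y / ‖y‖, mem_sphere_zero_iff_norm.2 hunit, ?_⟩
  have hdecomp : y - y / ‖y‖ = (‖y‖ - 1 : ℝ) * (y / ‖y‖) := by
    have hy' : (‖y‖ : ℂ) ≠ 0 := by exact_mod_cast hy
    field_simp
    push_cast
    ring
  rw [dist_eq_norm, hdecomp, norm_mul, hunit, mul_one, Complex.norm_real, Real.norm_eq_abs]
  exact abs_sub_lt_iff.2 ⟨by linarith, by linarith⟩

lemma exists_annulus_forall_ne_of_eventually_ne {f : ℂ → ℂ} {ε : ℝ} {w : ℂ} (hε : 0 < ε)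
    (hε1 : ε ≤ 1) (hf : ContinuousOn f (annulus (1 - ε) (1 + ε)))
    (hcircle : ∀ y : ℂ, ‖y‖ = 1 → y ≠ 1 → f y ≠ w) (h1 : ∀ᶠ y in 𝓝[≠] 1, f y ≠ w) :
    ∃ ε' > 0, ε' ≤ ε ∧ ∀ y ∈ annulus (1 - ε') (1 + ε'), y ≠ 1 → f y ≠ w := by
  obtain ⟨δ, hδ, hδne⟩ := exists_thickening_ne_of_eventually_ne (isOpen_annulus _ _) hf
    (isCompact_sphere 0 1)
    (fun y hy => by rw [mem_sphere_zero_iff_norm] at hy; exact ⟨by linarith, by linarith⟩)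
    (fun y hy => hcircle y (mem_sphere_zero_iff_norm.1 hy)) h1
  refine ⟨min δ ε, lt_min hδ hε, min_le_right δ ε, fun y hy => hδne y ?_⟩
  exact thickening_mono (min_le_left δ ε) _
    (annulus_subset_thickening_sphere ((min_le_right δ ε).trans hε1) hy)

lemma exists_one_div_eq_inv_div_sub_add {f : ℂ → ℂ} {U : Set ℂ} {z₀ a : ℂ} (hU : IsOpen U)
    (hz₀ : z₀ ∈ U) (hf : DifferentiableOn ℂ f U) (hfz₀ : f z₀ = 0) (hfa : HasDerivAt f a z₀)
    (ha : a ≠ 0) (hne : ∀ z ∈ U, z ≠ z₀ → f z ≠ 0) :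
    ∃ h : ℂ → ℂ, DifferentiableOn ℂ h U ∧ ∀ z ∈ U, z ≠ z₀ → 1 / f z = a⁻¹ / (z - z₀) + h z := by
  have hg_of_ne {z : ℂ} (hz : z ≠ z₀) : dslope f z₀ z = f z / (z - z₀) := by
    rw [dslope_of_ne _ hz, slope_def_field, hfz₀, sub_zero]
  have hgz₀ : dslope f z₀ z₀ = a := by rw [dslope_same, hfa.deriv]
  have hg : DifferentiableOn ℂ (dslope f z₀) U :=
    (Complex.differentiableOn_dslope (hU.mem_nhds hz₀)).2 hf
  have hg0 : ∀ z ∈ U, dslope f z₀ z ≠ 0 := by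
    intro z hz
    by_cases hzz₀ : z = z₀
    · rwa [hzz₀, hgz₀]
    · rw [hg_of_ne hzz₀]
      exact div_ne_zero (hne z hz hzz₀) (sub_ne_zero.2 hzz₀)
  refine ⟨dslope (fun z => (dslope f z₀ z)⁻¹) z₀,
    (Complex.differentiableOn_dslope (hU.mem_nhds hz₀)).2 (hg.inv hg0), fun z hz hzz₀ => ?_⟩
  rw [dslope_of_ne _ hzz₀, slope_def_field, hg_of_ne hzz₀, hgz₀]
  field_simp [hne z hz hzz₀]
  ring

theorem stmt13_general (ε : ℝ) (hε : 0 < ε) (hε1 : ε < 1) (p : ℤ → ℝ) (Φ : ℂ → ℂ)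
    (hp1 : HasSum p 1)
    (hΦ : ∀ y : ℂ, 1 - ε < ‖y‖ → ‖y‖ < 1 + ε →
      HasSum (fun ℓ : ℤ => (p ℓ : ℂ) * y ^ ℓ) (Φ y))
    (d : ℝ) (hd : HasSum (fun ℓ : ℤ => p ℓ * (ℓ : ℝ)) d) (hd0 : 0 < d)
    (haper : ∀ y : ℂ, ‖y‖ = 1 → y ≠ 1 → ‖Φ y‖ < 1) :
    ∃ ε' : ℝ, 0 < ε' ∧ ε' ≤ ε ∧ ∃ h : ℂ → ℂ,
      AnalyticOnNhd ℂ h {y : ℂ | 1 - ε' < ‖y‖ ∧ ‖y‖ < 1 + ε'} ∧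
      ∀ y : ℂ, 1 - ε' < ‖y‖ → ‖y‖ < 1 + ε' → y ≠ 1 →
        Φ y ≠ 1 ∧ 1 / (1 - Φ y) = -(1 / (d : ℂ)) / (y - 1) + h y := by
  have hlaurent {y : ℂ} (hy : y ∈ annulus (1 - ε) (1 + ε)) : DifferentiableAt ℂ Φ y ∧
      HasSum (fun ℓ : ℤ => (p ℓ : ℂ) * ℓ * y ^ (ℓ - 1)) (deriv Φ y) :=
    differentiableAt_and_hasSum_deriv_of_hasSum_laurent (by linarith)
      (fun z hz => hΦ z hz.1 hz.2) hy
  have h1 : (1 : ℂ) ∈ annulus (1 - ε) (1 + ε) := ⟨by simpa using hε, by simpa using hε⟩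
  have hΦ1 : Φ 1 = 1 := by
    simpa using (hΦ 1 h1.1 h1.2).unique (by simpa using Complex.hasSum_ofReal.2 hp1)
  have hΦ'1 : HasDerivAt Φ d 1 := by
    have hderiv : deriv Φ 1 = d :=
      (hlaurent h1).2.unique (by simpa [mul_comm] using Complex.hasSum_ofReal.2 hd)
    exact hderiv ▸ (hlaurent h1).1.hasDerivAt
  have hd0' : (d : ℂ) ≠ 0 := Complex.ofReal_ne_zero.2 hd0.ne'
  obtain ⟨ε', hε', hε'ε, hne⟩ := exists_annulus_forall_ne_of_eventually_ne hε hε1.le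
    (fun y hy => (hlaurent hy).1.continuousAt.continuousWithinAt)
    (fun y hy hy1 hΦy => (haper y hy hy1).ne (by rw [hΦy, norm_one]))
    (hΦ'1.eventually_ne hd0')
  have hsub : annulus (1 - ε') (1 + ε') ⊆ annulus (1 - ε) (1 + ε) :=
    annulus_subset_annulus (by linarith) (by linarith)
  obtain ⟨h, hh, hpole⟩ := exists_one_div_eq_inv_div_sub_add (f := fun y => 1 - Φ y)
    (isOpen_annulus _ _) ⟨by simpa using hε', by simpa using hε'⟩
    (fun y hy => ((differentiableAt_const _).sub (hlaurent (hsub hy)).1).differentiableWithinAt)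
    (by simp [hΦ1]) ((hasDerivAt_const _ _).sub hΦ'1) (sub_ne_zero.2 hd0'.symm)
    (fun y hy hy1 => sub_ne_zero.2 (hne y hy hy1).symm)
  refine ⟨ε', hε', hε'ε, h, hh.analyticOnNhd (isOpen_annulus _ _),
    fun y hy1 hy2 hy => ⟨hne y ⟨hy1, hy2⟩ hy, ?_⟩⟩
  rw [hpole y ⟨hy1, hy2⟩ hy, zero_sub, inv_neg, one_div]

/-- Meromorphic structure of `1/(1 - Φ)` for an aperiodic probability-generating Laurent series
`Φ` with `Φ(1) = 1` and `Φ'(1) = d > 0`: on a small annulus around the unit circle,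
`1/(1 - Φ(y))` has a unique pole, simple, at `y = 1`, with residue `-1/d`. -/
theorem stmt13 (ε : ℝ) (hε : 0 < ε) (hε1 : ε < 1) (p : ℤ → ℝ) (Φ : ℂ → ℂ)
    (hp0 : ∀ ℓ, 0 ≤ p ℓ) (hp1 : HasSum p 1)
    (hΦ : ∀ y : ℂ, 1 - ε < ‖y‖ → ‖y‖ < 1 + ε →
      HasSum (fun ℓ : ℤ => (p ℓ : ℂ) * y ^ ℓ) (Φ y))
    (d : ℝ) (hd : HasSum (fun ℓ : ℤ => p ℓ * (ℓ : ℝ)) d) (hd0 : 0 < d)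
    (haper : ∀ y : ℂ, ‖y‖ = 1 → y ≠ 1 → ‖Φ y‖ < 1) :
    ∃ ε' : ℝ, 0 < ε' ∧ ε' ≤ ε ∧ ∃ h : ℂ → ℂ,
      AnalyticOnNhd ℂ h {y : ℂ | 1 - ε' < ‖y‖ ∧ ‖y‖ < 1 + ε'} ∧
      ∀ y : ℂ, 1 - ε' < ‖y‖ → ‖y‖ < 1 + ε' → y ≠ 1 →
        Φ y ≠ 1 ∧ 1 / (1 - Φ y) = -(1 / (d : ℂ)) / (y - 1) + h y :=
  stmt13_general ε hε hε1 p Φ hp1 hΦ d hd hd0 haper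
end

section
/- Let $\mu$ be a probability measure on $\mathbb{Z}^2$ with all exponential moments finite in a neighborhood of $0$, negative drift in both coordinates, and irreducible support. Define $\mathcal{Q}=\{(u,v)\in\mathbb{R}^2 : \sum_{i,j}\mu(i,j)e^{iu+jv}=1\}$ and let $u_0>0$, $v_0>0$ be determined by $(u_0,0)\in\mathcal{Q}$ and $(0,v_0)\in\mathcal{Q}$. Assume the Gauss map $(u,v)\mapsto \mathrm{grad}\,Q(e^u,e^v)/\|\mathrm{grad}\,Q(e^u,e^v)\|$ is a diffeomorphism from $\mathcal{Q}$ to the unit circle (Hennequin). Then for every $t>0$ and every $(u,v)\in\mathcal{Q}\cap(0,\infty)^2$, one has $u + t v > \min\{u_0,\, t v_0\}$. -/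
/-!
The Laplace transform `F w = ∑ μ(p) e^{⟨p, w⟩}` is convex, being a nonnegative combination of
exponentials of linear forms, and irreducibility of the support makes it strictly convex: two
distinct points are separated by some `⟨p, ·⟩` with `μ(p) ≠ 0`. If `u + t v ≤ min {u₀, t v₀}`
with `u, v > 0`, then `(u, v)` lies in the triangle spanned by `0`, `(u₀, 0)` and `(0, v₀)`,
off the edges through `0`. `F` equals `1` at the three vertices, so strict convexity forces
`F (u, v) < 1`, contradicting `(u, v) ∈ 𝒬`.
-/

open Set Real

lemma mul_exp_add_mul_le {m a b : ℝ} (hm : 0 ≤ m) (ha : 0 ≤ a) (hb : 0 ≤ b) (hab : a + b = 1)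
    (s t : ℝ) : m * exp (a * s + b * t) ≤ a * (m * exp s) + b * (m * exp t) := by
  have h := convexOn_exp.2 (mem_univ s) (mem_univ t) ha hb hab
  simp only [smul_eq_mul] at h
  nlinarith [mul_le_mul_of_nonneg_left h hm]

lemma mul_exp_add_mul_lt {m a b s t : ℝ} (hm : 0 < m) (ha : 0 < a) (hb : 0 < b)
    (hab : a + b = 1) (hst : s ≠ t) :
    m * exp (a * s + b * t) < a * (m * exp s) + b * (m * exp t) := by
  have h := strictConvexOn_exp.2 (mem_univ s) (mem_univ t) hst ha hb hab
  simp only [smul_eq_mul] at h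
  nlinarith [mul_lt_mul_of_pos_left h hm]

theorem strictConvexOn_tsum_mul_exp {ι E : Type*} [AddCommGroup E] [Module ℝ E]
    {μ : ι → ℝ} (hμ : ∀ i, 0 ≤ μ i) (ℓ : ι → E →ₗ[ℝ] ℝ)
    (hsum : ∀ w, Summable fun i => μ i * exp (ℓ i w))
    (hsep : ∀ x y, x ≠ y → ∃ i, μ i ≠ 0 ∧ ℓ i x ≠ ℓ i y) :
    StrictConvexOn ℝ univ fun w => ∑' i, μ i * exp (ℓ i w) := by
  refine ⟨convex_univ, fun x _ y _ hxy a b ha hb hab => ?_⟩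
  obtain ⟨i, hμi, hi⟩ := hsep x y hxy
  have hsum' := ((hsum x).mul_left a).add ((hsum y).mul_left b)
  simp only [smul_eq_mul, map_add, map_smul]
  rw [← tsum_mul_left, ← tsum_mul_left, ← (hsum x).mul_left a |>.tsum_add ((hsum y).mul_left b)]
  refine Summable.tsum_lt_tsum (i := i) (fun j => mul_exp_add_mul_le (hμ j) ha.le hb.le hab _ _)
    (mul_exp_add_mul_lt ((hμ i).lt_of_ne' hμi) ha hb hab hi) ?_ hsum'
  simpa only [map_add, map_smul, smul_eq_mul] using hsum (a • x + b • y)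

theorem StrictConvexOn.lt_of_add_le_one {𝕜 E : Type*} [Field 𝕜] [LinearOrder 𝕜]
    [IsStrictOrderedRing 𝕜] [AddCommGroup E] [Module 𝕜 E] {f : E → 𝕜}
    (hf : StrictConvexOn 𝕜 univ f) {x y : E} (hxy : x ≠ y) {c : 𝕜} (h0 : f 0 ≤ c)
    (hx : f x ≤ c) (hy : f y ≤ c) {a b : 𝕜} (ha : 0 < a) (hb : 0 < b) (hab : a + b ≤ 1) :
    f (a • x + b • y) < c := by
  set l := a + b
  have hl : 0 < l := add_pos ha hb
  have hl1 : a / l + b / l = 1 := by rw [← add_div, div_self hl.ne']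
  have hmid : f ((a / l) • x + (b / l) • y) < c := by
    calc f ((a / l) • x + (b / l) • y) < (a / l) • f x + (b / l) • f y :=
          hf.2 (mem_univ x) (mem_univ y) hxy (div_pos ha hl) (div_pos hb hl) hl1
      _ ≤ (a / l) • c + (b / l) • c := by
          gcongr
      _ = c := by rw [← add_smul, hl1, one_smul]
  have hsplit : a • x + b • y = l • ((a / l) • x + (b / l) • y) + (1 - l) • (0 : E) := by
    rw [smul_zero, add_zero, smul_add, smul_smul, smul_smul, mul_div_cancel₀ _ hl.ne',
      mul_div_cancel₀ _ hl.ne']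
  calc f (a • x + b • y) ≤ l • f ((a / l) • x + (b / l) • y) + (1 - l) • f 0 := by
        rw [hsplit]
        exact hf.convexOn.2 (mem_univ _) (mem_univ _) hl.le (sub_nonneg.2 hab) (by ring)
    _ < l • c + (1 - l) • c := by
        simp only [smul_eq_mul]
        nlinarith [mul_lt_mul_of_pos_left hmid hl, mul_le_mul_of_nonneg_left h0 (sub_nonneg.2 hab)]
    _ = c := by simp only [smul_eq_mul]; ring

def latticePairing (p : ℤ × ℤ) : ℝ × ℝ →ₗ[ℝ] ℝ :=
  (p.1 : ℝ) • LinearMap.fst ℝ ℝ ℝ + (p.2 : ℝ) • LinearMap.snd ℝ ℝ ℝ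

@[simp]
lemma latticePairing_apply (p : ℤ × ℤ) (w : ℝ × ℝ) :
    latticePairing p w = p.1 * w.1 + p.2 * w.2 := rfl

lemma exists_latticePairing_ne_of_closure_eq_top {S : Set (ℤ × ℤ)}
    (hS : AddSubgroup.closure S = ⊤) {x y : ℝ × ℝ} (hxy : x ≠ y) :
    ∃ p ∈ S, latticePairing p x ≠ latticePairing p y := by
  by_contra! h
  let φ : ℤ × ℤ →+ ℝ :=
    { toFun := fun p => latticePairing p (x - y)
      map_zero' := by simp
      map_add' := fun p q => by
        simp only [latticePairing_apply, Prod.fst_add, Prod.snd_add]; push_cast; ring }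
  have hker : AddSubgroup.closure S ≤ φ.ker :=
    (AddSubgroup.closure_le _).2 fun p hp =>
      AddMonoidHom.mem_ker.2 <| by
        simp only [φ, AddMonoidHom.coe_mk, ZeroHom.coe_mk, map_sub, h p hp, sub_self]
  rw [hS] at hker
  have h1 : φ (1, 0) = 0 := hker trivial
  have h2 : φ (0, 1) = 0 := hker trivial
  simp [φ, sub_eq_zero] at h1 h2
  exact hxy (Prod.ext h1 h2)

lemma div_add_div_le_one_of_add_mul_le_min {x y u v t : ℝ} (hx : 0 ≤ x) (hy : 0 ≤ y)
    (hu : 0 < u) (hv : 0 < v) (ht : 0 < t) (h : x + t * y ≤ min u (t * v)) :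
    x / u + y / v ≤ 1 := by
  have hm : 0 < min u (t * v) := lt_min hu (mul_pos ht hv)
  calc x / u + y / v = x / u + t * y / (t * v) := by rw [mul_div_mul_left _ _ ht.ne']
    _ ≤ x / min u (t * v) + t * y / min u (t * v) := by
        gcongr
        · exact min_le_left _ _
        · exact min_le_right _ _
    _ = (x + t * y) / min u (t * v) := by rw [add_div]
    _ ≤ 1 := (div_le_one hm).2 h

theorem stmt16_general (μ : ℤ × ℤ → ℝ) (hμ0 : ∀ p, 0 ≤ μ p) (hμ1 : HasSum μ 1)
    (hexp : ∀ w : ℝ × ℝ,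
      Summable (fun p : ℤ × ℤ => μ p * Real.exp ((p.1 : ℝ) * w.1 + (p.2 : ℝ) * w.2)))
    (hirr : AddSubgroup.closure {p : ℤ × ℤ | μ p ≠ 0} = ⊤)
    (F : ℝ × ℝ → ℝ)
    (hF : ∀ w, F w = ∑' p : ℤ × ℤ, μ p * Real.exp ((p.1 : ℝ) * w.1 + (p.2 : ℝ) * w.2))
    (Q : Set (ℝ × ℝ)) (hQ : Q = {w | F w = 1})
    (u0 v0 : ℝ) (hu0 : 0 < u0) (hv0 : 0 < v0)
    (hu0Q : ((u0, 0) : ℝ × ℝ) ∈ Q) (hv0Q : ((0, v0) : ℝ × ℝ) ∈ Q) :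
    ∀ t : ℝ, 0 < t → ∀ w : ℝ × ℝ, w ∈ Q → 0 < w.1 → 0 < w.2 →
      min u0 (t * v0) < w.1 + t * w.2 := by
  intro t ht w hw hw1 hw2
  by_contra! hle
  have hFexp : F = fun w => ∑' p, μ p * exp (latticePairing p w) := funext hF
  have hconv : StrictConvexOn ℝ univ F := hFexp ▸
    strictConvexOn_tsum_mul_exp hμ0 latticePairing hexp fun x y hxy => by
      simpa using exists_latticePairing_ne_of_closure_eq_top hirr hxy
  subst hQ
  have hF0 : F 0 = 1 := by simpa [hF] using hμ1.tsum_eq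
  have hwcomb : w = (w.1 / u0) • ((u0, 0) : ℝ × ℝ) + (w.2 / v0) • ((0, v0) : ℝ × ℝ) := by
    ext <;> simp [hu0.ne', hv0.ne']
  have hlt := hconv.lt_of_add_le_one (by simp [hu0.ne']) hF0.le (le_of_eq hu0Q) (le_of_eq hv0Q)
    (div_pos hw1 hu0) (div_pos hw2 hv0)
    (div_add_div_le_one_of_add_mul_le_min hw1.le hw2.le hu0 hv0 ht hle)
  rw [← hwcomb] at hlt
  exact hlt.ne hw

/-- Key inequality on the kernel curve: for a probability measure `μ` on `ℤ²` with exponential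
moments, negative drift in both coordinates, irreducible support, and whose Gauss map is a
bijection from the curve `𝒬 = {(u,v) : ∑ μ(i,j) e^{iu+jv} = 1}` onto the unit circle, every
point `(u,v) ∈ 𝒬 ∩ (0,∞)²` satisfies `u + t v > min{u₀, t v₀}` for every `t > 0`. -/
theorem stmt16 (μ : ℤ × ℤ → ℝ) (hμ0 : ∀ p, 0 ≤ μ p) (hμ1 : HasSum μ 1)
    (hexp : ∀ w : ℝ × ℝ,
      Summable (fun p : ℤ × ℤ => μ p * Real.exp ((p.1 : ℝ) * w.1 + (p.2 : ℝ) * w.2)))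
    (hm1s : Summable fun p : ℤ × ℤ => μ p * (p.1 : ℝ))
    (hm1 : ∑' p : ℤ × ℤ, μ p * (p.1 : ℝ) < 0)
    (hm2s : Summable fun p : ℤ × ℤ => μ p * (p.2 : ℝ))
    (hm2 : ∑' p : ℤ × ℤ, μ p * (p.2 : ℝ) < 0)
    (hirr : AddSubgroup.closure {p : ℤ × ℤ | μ p ≠ 0} = ⊤)
    (F : ℝ × ℝ → ℝ)
    (hF : ∀ w, F w = ∑' p : ℤ × ℤ, μ p * Real.exp ((p.1 : ℝ) * w.1 + (p.2 : ℝ) * w.2))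
    (Q : Set (ℝ × ℝ)) (hQ : Q = {w | F w = 1})
    (u0 v0 : ℝ) (hu0 : 0 < u0) (hv0 : 0 < v0)
    (hu0Q : ((u0, 0) : ℝ × ℝ) ∈ Q) (hv0Q : ((0, v0) : ℝ × ℝ) ∈ Q)
    (gradF : ℝ × ℝ → ℝ × ℝ)
    (hgrad : ∀ w, HasFDerivAt F
      ((gradF w).1 • ContinuousLinearMap.fst ℝ ℝ ℝ
        + (gradF w).2 • ContinuousLinearMap.snd ℝ ℝ ℝ) w)
    (hGauss : Set.BijOn (fun w => (‖gradF w‖)⁻¹ • gradF w) Q {v : ℝ × ℝ | ‖v‖ = 1}) :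
    ∀ t : ℝ, 0 < t → ∀ w : ℝ × ℝ, w ∈ Q → 0 < w.1 → 0 < w.2 →
      min u0 (t * v0) < w.1 + t * w.2 :=
  stmt16_general μ hμ0 hμ1 hexp hirr F hF Q hQ u0 v0 hu0 hv0 hu0Q hv0Q
end

section
/- Let $A_1,A_2,B_1,B_2 > 0$, $y_1>1$, $t_0>0$, and define for $(i,j)\in\mathbb{N}^2$ the ratio $k(i,j) = \frac{A_1 y_1^{\,j - i t_0} + A_2}{B_1 y_1^{\,j - i t_0} + B_2}$. If $t_0 = n_0/m_0$ is rational (in lowest terms), then the set of limit points of $k(i,j)$ as $i+j\to\infty$ with $j/i\to t_0$ is the countable discrete set $\Big\{\frac{A_1 y_1^{n/m_0}+A_2}{B_1 y_1^{n/m_0}+B_2} : n\in\mathbb{Z}\Big\}\cup\Big\{\frac{A_1}{B_1},\frac{A_2}{B_2}\Big\}$, whereas if $t_0$ is irrational, the set of limit points is the full interval $\Big\{\frac{A_1 u + A_2}{B_1 u + B_2} : u\in[0,\infty]\Big\}$ (a continuum homeomorphic to a closed interval). -/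
/-!
Write `s = j - i t₀` for the discrepancy of `(i, j)`. Along any sequence with `j / i → t₀`,
a subsequence of the discrepancies tends to `+∞`, to `-∞` or to a finite limit `σ`, and the
kernel correspondingly tends to `A₁/B₁`, to `A₂/B₂` or to its value at `σ`; conversely any
such `σ` that is approached by discrepancies of pairs with arbitrarily large `i` is attained,
the condition `j / i → t₀` being then automatic once `i` is chosen large enough. For
`t₀ = n₀/m₀` in lowest terms the discrepancies are exactly the multiples of `1/m₀` (Bézout),
while for irrational `t₀` Dirichlet's approximation theorem gives discrepancies of arbitrarily
small nonzero size, whose multiples come arbitrarily close to every real number.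
-/

open Filter Topology Set

def limitSetAlongSlope (t : ℝ) (f : ℝ → ℝ) : Set ℝ :=
  {x | ∃ u : ℕ → ℕ × ℕ,
    Tendsto (fun n => (u n).1 + (u n).2) atTop atTop ∧
    Tendsto (fun n => ((u n).2 : ℝ) / ((u n).1 : ℝ)) atTop (𝓝 t) ∧
    Tendsto (fun n => f (((u n).2 : ℝ) - ((u n).1 : ℝ) * t)) atTop (𝓝 x)}

section Diophantine

variable {t : ℝ}

lemma exists_nat_sub_mul_near (ht : 0 < t) (σ : ℝ) (N : ℕ) :
    ∃ i j : ℕ, N ≤ i ∧ |(j : ℝ) - i * t - σ| < 1 := by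
  obtain ⟨i, hNi, hi⟩ : ∃ i : ℕ, N ≤ i ∧ |σ| / t ≤ i :=
    ⟨max N ⌈|σ| / t⌉₊, le_max_left _ _,
      (Nat.le_ceil _).trans (by exact_mod_cast le_max_right _ _)⟩
  have hpos : 0 ≤ i * t + σ := by
    linarith [(div_le_iff₀ ht).1 hi, neg_abs_le σ]
  refine ⟨i, ⌈i * t + σ⌉₊, hNi, abs_lt.2 ⟨?_, ?_⟩⟩ <;>
    linarith [Nat.le_ceil (i * t + σ), Nat.ceil_lt_add_one hpos]

lemma exists_nat_sub_mul_div_eq {n₀ m₀ : ℤ} (hn₀ : 0 < n₀) (hm₀ : 0 < m₀)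
    (hcop : IsCoprime n₀ m₀) (n : ℤ) (N : ℕ) :
    ∃ i j : ℕ, N ≤ i ∧ (j : ℝ) - i * (n₀ / m₀ : ℝ) = n / m₀ := by
  obtain ⟨a, b, hab⟩ := hcop
  -- the solutions of `j m₀ - i n₀ = n` are `(i, j) = (k m₀ - n a, k n₀ + n b)`, `k ∈ ℤ`
  set k : ℤ := N + |n * a| + |n * b|
  have hi : (N : ℤ) ≤ k * m₀ - n * a := by
    nlinarith [le_abs_self (n * a), abs_nonneg (n * b), mul_nonneg (by positivity : (0 : ℤ) ≤ k)
      (by omega : (0 : ℤ) ≤ m₀ - 1)]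
  have hj : 0 ≤ k * n₀ + n * b := by
    nlinarith [neg_abs_le (n * b), abs_nonneg (n * a), mul_nonneg (by positivity : (0 : ℤ) ≤ k)
      (by omega : (0 : ℤ) ≤ n₀ - 1)]
  refine ⟨(k * m₀ - n * a).toNat, (k * n₀ + n * b).toNat, by omega, ?_⟩
  have hm : (m₀ : ℝ) ≠ 0 := by positivity
  have habR : (a : ℝ) * n₀ + b * m₀ = 1 := by exact_mod_cast hab
  rw [show (((k * m₀ - n * a).toNat : ℕ) : ℝ) = ((k * m₀ - n * a : ℤ) : ℝ) by
      exact_mod_cast Int.toNat_of_nonneg (hi.trans' (by positivity)),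
    show (((k * n₀ + n * b).toNat : ℕ) : ℝ) = ((k * n₀ + n * b : ℤ) : ℝ) by
      exact_mod_cast Int.toNat_of_nonneg hj]
  push_cast
  field_simp
  linear_combination (n : ℝ) * habR

lemma exists_add_nat_mul_near {g s σ : ℝ} (hg : g ≠ 0) (h : 0 ≤ (σ - s) / g) :
    ∃ m : ℕ, |s + m * g - σ| < |g| := by
  refine ⟨⌊(σ - s) / g⌋₊, ?_⟩
  have hfloor := Nat.floor_le h
  have hfloor' := Nat.lt_floor_add_one ((σ - s) / g)
  have : s + ⌊(σ - s) / g⌋₊ * g - σ = -(((σ - s) / g - ⌊(σ - s) / g⌋₊) * g) := by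
    field_simp
    ring
  rw [this, abs_neg, abs_mul, abs_of_nonneg (by linarith)]
  exact mul_lt_of_lt_one_left (abs_pos.2 hg) (by linarith)

lemma exists_nat_sub_mul_ne_zero_abs_lt (ht : 0 < t) (hirr : Irrational t) {ε : ℝ}
    (hε : 0 < ε) : ∃ p q : ℕ, (p : ℝ) - q * t ≠ 0 ∧ |(p : ℝ) - q * t| < ε := by
  obtain ⟨n, hn⟩ := exists_nat_one_div_lt hε
  obtain ⟨j, k, hk, -, hjk⟩ := Real.exists_int_int_abs_mul_sub_le t n.succ_pos
  have hsmall : 1 / ((n.succ : ℕ) + 1 : ℝ) ≤ 1 / (n + 1) := by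
    gcongr
    linarith
  have hlt_one : 1 / ((n.succ : ℕ) + 1 : ℝ) < 1 := by
    rw [div_lt_one (by positivity)]
    push_cast
    linarith [(n.cast_nonneg : (0 : ℝ) ≤ n)]
  have hkt : 0 < (k : ℝ) * t := mul_pos (by exact_mod_cast hk) ht
  have hj : 0 ≤ j := by
    have : (-1 : ℝ) < j := by linarith [(abs_lt.1 (hjk.trans_lt hlt_one)).2]
    have : (-1 : ℤ) < j := by exact_mod_cast this
    omega
  refine ⟨j.toNat, k.toNat, ?_, ?_⟩
  all_goals
    rw [show ((j.toNat : ℕ) : ℝ) = j by exact_mod_cast Int.toNat_of_nonneg hj,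
      show ((k.toNat : ℕ) : ℝ) = k by exact_mod_cast Int.toNat_of_nonneg hk.le]
  · exact sub_ne_zero.2 ((hirr.intCast_mul hk.ne').ne_int j).symm
  · rw [abs_sub_comm]
    exact hjk.trans_lt (hsmall.trans_lt hn)

lemma exists_nat_sub_mul_near_of_irrational (ht : 0 < t) (hirr : Irrational t) (σ : ℝ)
    {ε : ℝ} (hε : 0 < ε) (N : ℕ) : ∃ i j : ℕ, N ≤ i ∧ |(j : ℝ) - i * t - σ| < ε := by
  obtain ⟨p, q, hg, hgε⟩ := exists_nat_sub_mul_ne_zero_abs_lt ht hirr hε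
  set g : ℝ := p - q * t
  -- start on the side of `σ` from which steps by `g` move towards `σ`
  obtain ⟨i₀, j₀, hi₀, hs₀⟩ := exists_nat_sub_mul_near ht (σ - g / |g|) N
  have hside : 0 ≤ (σ - (j₀ - i₀ * t)) / g := by
    obtain ⟨hs₀l, hs₀r⟩ := abs_lt.1 hs₀
    rcases hg.lt_or_gt with hneg | hpos
    · rw [abs_of_neg hneg, div_neg, div_self hneg.ne] at hs₀l hs₀r
      exact div_nonneg_of_nonpos (by linarith) hneg.le
    · rw [abs_of_pos hpos, div_self hpos.ne'] at hs₀l hs₀r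
      exact div_nonneg (by linarith) hpos.le
  obtain ⟨m, hm⟩ := exists_add_nat_mul_near hg hside
  refine ⟨i₀ + m * q, j₀ + m * p, by omega, ?_⟩
  calc |((j₀ + m * p : ℕ) : ℝ) - ((i₀ + m * q : ℕ) : ℝ) * t - σ|
      = |(j₀ - i₀ * t) + m * g - σ| := by
        congr 1
        push_cast
        ring
    _ < ε := hm.trans hgε

end Diophantine

section LimitSet

variable {t : ℝ} {f : ℝ → ℝ}

lemma exists_seq_of_forall_exists_near {σ ε : ℕ → ℝ}
    (h : ∀ k N, ∃ i j : ℕ, N ≤ i ∧ |(j : ℝ) - i * t - σ k| < ε k) :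
    ∃ u : ℕ → ℕ × ℕ, Tendsto (fun n => (u n).1 + (u n).2) atTop atTop ∧
      Tendsto (fun n => ((u n).2 : ℝ) / ((u n).1 : ℝ)) atTop (𝓝 t) ∧
      ∀ k, |((u k).2 : ℝ) - (u k).1 * t - σ k| < ε k := by
  -- `i ≥ (k + 1) (|σ k| + ε k)` forces `|j / i - t| = |j - i t| / i ≤ 1 / (k + 1)`
  choose i j hNi hij using fun k => h k (⌈(k + 1) * (|σ k| + ε k)⌉₊ + k + 1)
  refine ⟨fun k => (i k, j k), ?_, ?_, hij⟩
  · exact tendsto_atTop_mono (fun k => by have := hNi k; simp only [id]; omega) tendsto_id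
  refine tendsto_iff_norm_sub_tendsto_zero.2 <| squeeze_zero (fun _ => norm_nonneg _)
    (fun k => ?_) tendsto_one_div_add_atTop_nhds_zero_nat
  have hi : (k + 1) * (|σ k| + ε k) ≤ i k := by
    refine (Nat.le_ceil _).trans ?_
    exact_mod_cast (Nat.le_add_right _ _).trans ((Nat.le_add_right _ _).trans (hNi k))
  have hdisc : |(j k : ℝ) - i k * t| < |σ k| + ε k := by
    calc |(j k : ℝ) - i k * t| = |((j k : ℝ) - i k * t - σ k) + σ k| := by ring_nf
      _ ≤ |(j k : ℝ) - i k * t - σ k| + |σ k| := abs_add_le _ _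
      _ < |σ k| + ε k := by linarith [hij k]
  have hipos : (0 : ℝ) < i k := by
    have : 0 < |σ k| + ε k := (abs_nonneg _).trans_lt hdisc
    nlinarith
  dsimp only
  rw [Real.norm_eq_abs, show (j k : ℝ) / i k - t = ((j k : ℝ) - i k * t) / i k by field_simp,
    abs_div, abs_of_pos hipos, div_le_div_iff₀ hipos (by positivity)]
  nlinarith [abs_nonneg ((j k : ℝ) - i k * t)]

lemma mem_limitSetAlongSlope_of_forall_exists_near {σ : ℝ} (hf : ContinuousAt f σ)
    (h : ∀ ε > 0, ∀ N : ℕ, ∃ i j : ℕ, N ≤ i ∧ |(j : ℝ) - i * t - σ| < ε) :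
    f σ ∈ limitSetAlongSlope t f := by
  obtain ⟨u, hsum, hslope, hnear⟩ := exists_seq_of_forall_exists_near (σ := fun _ => σ)
    (ε := fun k => 1 / ((k : ℝ) + 1)) fun k => h _ (by positivity)
  refine ⟨u, hsum, hslope, hf.tendsto.comp ?_⟩
  exact tendsto_iff_norm_sub_tendsto_zero.2 <| squeeze_zero (fun _ => norm_nonneg _)
    (fun k => (hnear k).le) tendsto_one_div_add_atTop_nhds_zero_nat

lemma mem_limitSetAlongSlope_of_tendsto_atTop {a : ℝ} (ht : 0 < t)
    (hf : Tendsto f atTop (𝓝 a)) : a ∈ limitSetAlongSlope t f := by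
  obtain ⟨u, hsum, hslope, hnear⟩ := exists_seq_of_forall_exists_near (σ := fun k => k)
    (ε := fun _ => 1) fun k => exists_nat_sub_mul_near ht k
  refine ⟨u, hsum, hslope, hf.comp <| tendsto_atTop_mono (fun k => ?_)
    (tendsto_atTop_add_const_right atTop (-1) tendsto_natCast_atTop_atTop)⟩
  linarith [(abs_lt.1 (hnear k)).1]

lemma mem_limitSetAlongSlope_of_tendsto_atBot {b : ℝ} (ht : 0 < t)
    (hf : Tendsto f atBot (𝓝 b)) : b ∈ limitSetAlongSlope t f := by
  obtain ⟨u, hsum, hslope, hnear⟩ := exists_seq_of_forall_exists_near (σ := fun k => -k)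
    (ε := fun _ => 1) fun k => exists_nat_sub_mul_near ht (-k)
  refine ⟨u, hsum, hslope, hf.comp <| tendsto_atBot_mono (fun k => ?_)
    (tendsto_atBot_add_const_right atTop 1
      (tendsto_neg_atTop_atBot.comp tendsto_natCast_atTop_atTop))⟩
  simp only [Function.comp_apply]
  linarith [(abs_lt.1 (hnear k)).2]

lemma exists_subseq_tendsto_atTop_or_atBot_or_nhds (s : ℕ → ℝ) :
    ∃ φ : ℕ → ℕ, StrictMono φ ∧ (Tendsto (s ∘ φ) atTop atTop ∨
      Tendsto (s ∘ φ) atTop atBot ∨ ∃ σ, Tendsto (s ∘ φ) atTop (𝓝 σ)) := by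
  obtain ⟨e, -, φ, hφ, he⟩ :=
    isCompact_univ.tendsto_subseq (x := fun n => (s n : EReal)) fun _ => mem_univ _
  refine ⟨φ, hφ, ?_⟩
  induction e using EReal.rec with
  | bot => exact Or.inr (Or.inl (EReal.tendsto_coe_nhds_bot_iff.1 he))
  | top => exact Or.inl (EReal.tendsto_coe_nhds_top_iff.1 he)
  | coe σ => exact Or.inr (Or.inr ⟨σ, EReal.tendsto_coe.1 he⟩)

lemma mem_limitSetAlongSlope_cases {a b x : ℝ} (hf : Continuous f)
    (ha : Tendsto f atTop (𝓝 a)) (hb : Tendsto f atBot (𝓝 b))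
    (hx : x ∈ limitSetAlongSlope t f) :
    x = a ∨ x = b ∨ ∃ σ ∈ closure (range fun p : ℕ × ℕ => (p.2 : ℝ) - p.1 * t), x = f σ := by
  obtain ⟨u, -, -, hfx⟩ := hx
  obtain ⟨φ, hφ, htop | hbot | ⟨σ, hσ⟩⟩ :=
    exists_subseq_tendsto_atTop_or_atBot_or_nhds fun n => ((u n).2 : ℝ) - (u n).1 * t
  all_goals have hxφ := hfx.comp hφ.tendsto_atTop
  · exact Or.inl (tendsto_nhds_unique hxφ (ha.comp htop))
  · exact Or.inr (Or.inl (tendsto_nhds_unique hxφ (hb.comp hbot)))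
  · refine Or.inr (Or.inr ⟨σ, mem_closure_of_tendsto hσ (Eventually.of_forall fun n => ?_),
      tendsto_nhds_unique hxφ ((hf.tendsto σ).comp hσ)⟩)
    exact mem_range_self (u (φ n))

end LimitSet

lemma closure_range_sub_mul_div_subset {n₀ m₀ : ℤ} (hm₀ : (m₀ : ℝ) ≠ 0) :
    closure (range fun p : ℕ × ℕ => (p.2 : ℝ) - p.1 * (n₀ / m₀ : ℝ)) ⊆
      range fun n : ℤ => (n : ℝ) / m₀ := by
  have hclosed : IsClosed (range fun n : ℤ => (n : ℝ) / m₀) := by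
    convert Int.isClosedEmbedding_coe_real.isClosed_range.preimage
      (continuous_mul_const (m₀ : ℝ)) using 1
    ext x
    simp only [mem_range, mem_preimage, eq_div_iff hm₀, eq_comm]
  refine closure_minimal ?_ hclosed
  rintro _ ⟨⟨i, j⟩, rfl⟩
  exact ⟨j * m₀ - i * n₀, by push_cast; field_simp⟩

theorem limitSetAlongSlope_eq_of_rational {f : ℝ → ℝ} {a b : ℝ} (hf : Continuous f)
    (ha : Tendsto f atTop (𝓝 a)) (hb : Tendsto f atBot (𝓝 b)) {n₀ m₀ : ℤ} (hm₀ : 0 < m₀)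
    (hcop : Int.gcd n₀ m₀ = 1) (ht : 0 < (n₀ / m₀ : ℝ)) :
    limitSetAlongSlope (n₀ / m₀) f = {x | ∃ n : ℤ, x = f (n / m₀)} ∪ {a, b} := by
  have hm₀R : (0 : ℝ) < m₀ := by exact_mod_cast hm₀
  have hn₀ : 0 < n₀ := by exact_mod_cast (div_pos_iff_of_pos_right hm₀R).1 ht
  ext x
  simp only [mem_union, mem_ofPred_eq, mem_insert_iff, mem_singleton_iff]
  constructor
  · intro hx
    obtain rfl | rfl | ⟨σ, hσ, rfl⟩ := mem_limitSetAlongSlope_cases hf ha hb hx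
    · exact Or.inr (Or.inl rfl)
    · exact Or.inr (Or.inr rfl)
    · obtain ⟨n, rfl⟩ := closure_range_sub_mul_div_subset hm₀R.ne' hσ
      exact Or.inl ⟨n, rfl⟩
  · rintro (⟨n, rfl⟩ | rfl | rfl)
    · refine mem_limitSetAlongSlope_of_forall_exists_near hf.continuousAt fun ε hε N => ?_
      obtain ⟨i, j, hi, hij⟩ :=
        exists_nat_sub_mul_div_eq hn₀ hm₀ (Int.isCoprime_iff_gcd_eq_one.2 hcop) n N
      exact ⟨i, j, hi, by rwa [hij, sub_self, abs_zero]⟩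
    · exact mem_limitSetAlongSlope_of_tendsto_atTop ht ha
    · exact mem_limitSetAlongSlope_of_tendsto_atBot ht hb

theorem limitSetAlongSlope_eq_of_irrational {f : ℝ → ℝ} {a b t : ℝ} (hf : Continuous f)
    (ha : Tendsto f atTop (𝓝 a)) (hb : Tendsto f atBot (𝓝 b)) (ht : 0 < t)
    (hirr : Irrational t) :
    limitSetAlongSlope t f = range f ∪ {a, b} := by
  ext x
  simp only [mem_union, mem_insert_iff, mem_singleton_iff]
  constructor
  · intro hx
    obtain rfl | rfl | ⟨σ, -, rfl⟩ := mem_limitSetAlongSlope_cases hf ha hb hx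
    · exact Or.inr (Or.inl rfl)
    · exact Or.inr (Or.inr rfl)
    · exact Or.inl (mem_range_self σ)
  · rintro (⟨σ, rfl⟩ | rfl | rfl)
    · exact mem_limitSetAlongSlope_of_forall_exists_near hf.continuousAt fun ε hε N =>
        exists_nat_sub_mul_near_of_irrational ht hirr σ hε N
    · exact mem_limitSetAlongSlope_of_tendsto_atTop ht ha
    · exact mem_limitSetAlongSlope_of_tendsto_atBot ht hb

section Mobius

variable {A₁ A₂ B₁ B₂ y : ℝ}

lemma tendsto_mobius_atTop (hB₁ : 0 < B₁) (hB₂ : 0 < B₂) :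
    Tendsto (fun u : ℝ => (A₁ * u + A₂) / (B₁ * u + B₂)) atTop (𝓝 (A₁ / B₁)) := by
  have h : Tendsto (fun u : ℝ => (A₁ + A₂ * u⁻¹) / (B₁ + B₂ * u⁻¹)) atTop
      (𝓝 ((A₁ + A₂ * 0) / (B₁ + B₂ * 0))) :=
    ((tendsto_inv_atTop_zero.const_mul A₂).const_add A₁).div
      ((tendsto_inv_atTop_zero.const_mul B₂).const_add B₁) (by simpa using hB₁.ne')
  simp only [mul_zero, add_zero] at h
  refine h.congr' ?_
  filter_upwards [eventually_gt_atTop 0] with u hu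
  field_simp

lemma continuous_mobius_rpow (hB₁ : 0 < B₁) (hB₂ : 0 < B₂) (hy : 0 < y) :
    Continuous fun s : ℝ => (A₁ * y ^ s + A₂) / (B₁ * y ^ s + B₂) := by
  have hpow := Real.continuous_const_rpow hy.ne'
  exact ((hpow.const_mul A₁).add_const A₂).div ((hpow.const_mul B₁).add_const B₂)
    fun s => by positivity

lemma tendsto_mobius_rpow_atTop (hB₁ : 0 < B₁) (hB₂ : 0 < B₂) (hy : 1 < y) :
    Tendsto (fun s : ℝ => (A₁ * y ^ s + A₂) / (B₁ * y ^ s + B₂)) atTop (𝓝 (A₁ / B₁)) :=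
  (tendsto_mobius_atTop hB₁ hB₂).comp (tendsto_rpow_atTop_of_base_gt_one y hy)

lemma tendsto_mobius_rpow_atBot (hB₂ : 0 < B₂) (hy : 1 < y) :
    Tendsto (fun s : ℝ => (A₁ * y ^ s + A₂) / (B₁ * y ^ s + B₂)) atBot (𝓝 (A₂ / B₂)) := by
  have hmob : ContinuousAt (fun u : ℝ => (A₁ * u + A₂) / (B₁ * u + B₂)) 0 :=
    ContinuousAt.div (by fun_prop) (by fun_prop) (by simpa using hB₂.ne')
  simpa [Function.comp_def] using hmob.tendsto.comp (tendsto_rpow_atBot_of_base_gt_one y hy)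

lemma setOf_mobius_nonneg_eq_range_union (hy : 1 < y) :
    {x | ∃ u : ℝ, 0 ≤ u ∧ x = (A₁ * u + A₂) / (B₁ * u + B₂)} =
      (range fun s : ℝ => (A₁ * y ^ s + A₂) / (B₁ * y ^ s + B₂)) ∪ {A₂ / B₂} := by
  have hy₀ : 0 < y := one_pos.trans hy
  ext x
  simp only [mem_ofPred_eq, mem_union, mem_range, mem_singleton_iff]
  constructor
  · rintro ⟨u, hu, rfl⟩
    rcases hu.eq_or_lt with rfl | hu
    · exact Or.inr (by simp)
    · exact Or.inl ⟨Real.logb y u, by rw [Real.rpow_logb hy₀ hy.ne' hu]⟩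
  · rintro (⟨s, rfl⟩ | rfl)
    · exact ⟨y ^ s, (Real.rpow_pos_of_pos hy₀ s).le, rfl⟩
    · exact ⟨0, le_rfl, by simp⟩

end Mobius

theorem stmt19_general (A1 A2 B1 B2 y1 t0 : ℝ)
    (hB1 : 0 < B1) (hB2 : 0 < B2)
    (hy1 : 1 < y1) (ht0 : 0 < t0) :
    (∀ n0 m0 : ℤ, 0 < m0 → Int.gcd n0 m0 = 1 → t0 = (n0 : ℝ) / (m0 : ℝ) →
      {x : ℝ | ∃ u : ℕ → ℕ × ℕ,
          Tendsto (fun n => (u n).1 + (u n).2) atTop atTop ∧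
          Tendsto (fun n => ((u n).2 : ℝ) / ((u n).1 : ℝ)) atTop (nhds t0) ∧
          Tendsto (fun n =>
              (A1 * y1 ^ (((u n).2 : ℝ) - ((u n).1 : ℝ) * t0) + A2) /
                (B1 * y1 ^ (((u n).2 : ℝ) - ((u n).1 : ℝ) * t0) + B2))
            atTop (nhds x)}
        = {x : ℝ | ∃ n : ℤ,
              x = (A1 * y1 ^ ((n : ℝ) / (m0 : ℝ)) + A2) /
                    (B1 * y1 ^ ((n : ℝ) / (m0 : ℝ)) + B2)}
            ∪ {A1 / B1, A2 / B2}) ∧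
    (Irrational t0 →
      {x : ℝ | ∃ u : ℕ → ℕ × ℕ,
          Tendsto (fun n => (u n).1 + (u n).2) atTop atTop ∧
          Tendsto (fun n => ((u n).2 : ℝ) / ((u n).1 : ℝ)) atTop (nhds t0) ∧
          Tendsto (fun n =>
              (A1 * y1 ^ (((u n).2 : ℝ) - ((u n).1 : ℝ) * t0) + A2) /
                (B1 * y1 ^ (((u n).2 : ℝ) - ((u n).1 : ℝ) * t0) + B2))
            atTop (nhds x)}
        = {x : ℝ | ∃ u : ℝ, 0 ≤ u ∧ x = (A1 * u + A2) / (B1 * u + B2)} ∪ {A1 / B1}) := by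
  have hF := continuous_mobius_rpow (A₁ := A1) (A₂ := A2) hB1 hB2 (one_pos.trans hy1)
  have hFtop := tendsto_mobius_rpow_atTop (A₁ := A1) (A₂ := A2) hB1 hB2 hy1
  have hFbot := tendsto_mobius_rpow_atBot (A₁ := A1) (A₂ := A2) (B₁ := B1) hB2 hy1
  refine ⟨fun n0 m0 hm0 hgcd ht0eq => ?_, fun hirr => ?_⟩
  · subst ht0eq
    exact limitSetAlongSlope_eq_of_rational hF hFtop hFbot hm0 hgcd ht0
  · refine (limitSetAlongSlope_eq_of_irrational hF hFtop hFbot ht0 hirr).trans ?_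
    rw [setOf_mobius_nonneg_eq_range_union hy1, union_assoc, pair_comm, insert_eq,
      union_comm {A2 / B2}]

/-- Dichotomy behind the instability of the Martin boundary: the set of limit points of the
Möbius-type Martin kernels `k(i,j) = (A₁ y₁^{j - i t₀} + A₂)/(B₁ y₁^{j - i t₀} + B₂)` as
`i + j → ∞` with `j/i → t₀` is a discrete countable set when `t₀ = n₀/m₀` is rational (in
lowest terms), and a full continuum `{(A₁u + A₂)/(B₁u + B₂) : u ∈ [0,∞]}` when `t₀` is
irrational. -/
theorem stmt19 (A1 A2 B1 B2 y1 t0 : ℝ)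
    (hA1 : 0 < A1) (hA2 : 0 < A2) (hB1 : 0 < B1) (hB2 : 0 < B2)
    (hy1 : 1 < y1) (ht0 : 0 < t0) :
    (∀ n0 m0 : ℤ, 0 < m0 → Int.gcd n0 m0 = 1 → t0 = (n0 : ℝ) / (m0 : ℝ) →
      {x : ℝ | ∃ u : ℕ → ℕ × ℕ,
          Tendsto (fun n => (u n).1 + (u n).2) atTop atTop ∧
          Tendsto (fun n => ((u n).2 : ℝ) / ((u n).1 : ℝ)) atTop (nhds t0) ∧
          Tendsto (fun n =>
              (A1 * y1 ^ (((u n).2 : ℝ) - ((u n).1 : ℝ) * t0) + A2) /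
                (B1 * y1 ^ (((u n).2 : ℝ) - ((u n).1 : ℝ) * t0) + B2))
            atTop (nhds x)}
        = {x : ℝ | ∃ n : ℤ,
              x = (A1 * y1 ^ ((n : ℝ) / (m0 : ℝ)) + A2) /
                    (B1 * y1 ^ ((n : ℝ) / (m0 : ℝ)) + B2)}
            ∪ {A1 / B1, A2 / B2}) ∧
    (Irrational t0 →
      {x : ℝ | ∃ u : ℕ → ℕ × ℕ,
          Tendsto (fun n => (u n).1 + (u n).2) atTop atTop ∧
          Tendsto (fun n => ((u n).2 : ℝ) / ((u n).1 : ℝ)) atTop (nhds t0) ∧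
          Tendsto (fun n =>
              (A1 * y1 ^ (((u n).2 : ℝ) - ((u n).1 : ℝ) * t0) + A2) /
                (B1 * y1 ^ (((u n).2 : ℝ) - ((u n).1 : ℝ) * t0) + B2))
            atTop (nhds x)}
        = {x : ℝ | ∃ u : ℝ, 0 ≤ u ∧ x = (A1 * u + A2) / (B1 * u + B2)} ∪ {A1 / B1}) :=
  stmt19_general A1 A2 B1 B2 y1 t0 hB1 hB2 hy1 ht0
end
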